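/- arXiv:1206.6146 — 5 statements merged into one kernel-verified Lean document; each statement's English description precedes it below -/
import Mathlib

section
/- Let X be a real Banach space, let {(x_j, f_j)}_{j∈ℕ} be a Schauder frame of X, and let S : X → X* be a bounded linear operator with S(x_j) = f_j for all j. Then for every x ∈ X the series Σ_j |f_j(x)|² converges and (S x)(x) = Σ_j |f_j(x)|² ≥ 0; in particular S is a positive operator. -/
open Filter Topology

/-- A Schauder frame of a real Banach space `X`: for every `v ∈ X`, the partial sums
`∑_{j < N} f j (v) • x j` converge to `v` in norm. -/
def SchauderFrame {X : Type*} [NormedAddCommGroup X] [NormedSpace ℝ X]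
    (x : ℕ → X) (f : ℕ → X →L[ℝ] ℝ) : Prop :=
  ∀ v : X, Tendsto (fun N => ∑ j ∈ Finset.range N, f j v • x j) atTop (𝓝 v)

theorem SchauderFrame.tendsto_sum_smul_map {X F : Type*} [NormedAddCommGroup X]
    [NormedSpace ℝ X] [NormedAddCommGroup F] [NormedSpace ℝ F] {x : ℕ → X}
    {f : ℕ → X →L[ℝ] ℝ} (hframe : SchauderFrame x f) (L : X →L[ℝ] F) (v : X) :
    Tendsto (fun N => ∑ j ∈ Finset.range N, f j v • L (x j)) atTop (𝓝 (L v)) := by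
  simpa only [Function.comp_def, map_sum, map_smul] using (L.continuous.tendsto v).comp (hframe v)

theorem hsf_operator_positive_general
    {X : Type*} [NormedAddCommGroup X] [NormedSpace ℝ X]
    (x : ℕ → X) (f : ℕ → X →L[ℝ] ℝ) (hframe : SchauderFrame x f)
    (S : X →L[ℝ] X →L[ℝ] ℝ) (hS : ∀ j, S (x j) = f j) :
    ∀ v : X, HasSum (fun j => |f j v| ^ 2) (S v v) ∧ 0 ≤ S v v := by
  intro v
  have hpartial : Tendsto (fun N => ∑ j ∈ Finset.range N, |f j v| ^ 2) atTop (𝓝 (S v v)) := by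
    simpa only [ContinuousLinearMap.flip_apply, hS, smul_eq_mul, ← sq, sq_abs] using
      hframe.tendsto_sum_smul_map (S.flip v) v
  have hsum : HasSum (fun j => |f j v| ^ 2) (S v v) :=
    (hasSum_iff_tendsto_nat_of_nonneg (fun j => sq_nonneg _) _).2 hpartial
  exact ⟨hsum, hsum.nonneg fun j => sq_nonneg _⟩

/-- For a Hilbert-Schauder frame operator `S`, for every `x` the series `∑ⱼ |fⱼ(x)|²`
converges with sum `(S x)(x)`, which is nonnegative; in particular `S` is positive. -/
theorem hsf_operator_positive
    {X : Type*} [NormedAddCommGroup X] [NormedSpace ℝ X] [CompleteSpace X]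
    (x : ℕ → X) (f : ℕ → X →L[ℝ] ℝ) (hframe : SchauderFrame x f)
    (S : X →L[ℝ] X →L[ℝ] ℝ) (hS : ∀ j, S (x j) = f j) :
    ∀ v : X, HasSum (fun j => |f j v| ^ 2) (S v v) ∧ 0 ≤ S v v :=
  hsf_operator_positive_general x f hframe S hS
end

section
/- Let X be a real Banach space and let {(x_j, f_j)}_{j∈ℕ} be a Hilbert-Schauder frame of X with Hilbert-Schauder frame operator S. Then there exists a bounded linear operator A : X → ℓ²(ℕ, ℝ) (the Hilbert-Schauder analysis operator) such that (A x)_j = f_j(x) for all x ∈ X and all j ∈ ℕ, and ‖A‖ ≤ ‖S‖^{1/2}. -/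
open Filter Topology

/-!
Applying `S` to the partial sums of the frame expansion of `v` and evaluating at `v` gives
`S (∑_{j<N} f_j(v) x_j) v = ∑_{j<N} f_j(v)²`, so `∑_j f_j(v)² = S v v ≤ ‖S‖ ‖v‖²`. Hence
`v ↦ (f_j(v))_j` maps `X` into `ℓ²` with norm at most `√‖S‖`.
-/

section

variable {X : Type*} [NormedAddCommGroup X] [NormedSpace ℝ X]

theorem SchauderFrame.hasSum_sq {x : ℕ → X} {f : ℕ → X →L[ℝ] ℝ} (hframe : SchauderFrame x f)
    {S : X →L[ℝ] X →L[ℝ] ℝ} (hS : ∀ j, S (x j) = f j) (v : X) :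
    HasSum (fun j => f j v ^ 2) (S v v) := by
  have hpartial : ∀ N, ∑ j ∈ Finset.range N, f j v ^ 2 =
      S.flip v (∑ j ∈ Finset.range N, f j v • x j) := by
    intro N
    simp [map_sum, hS, sq]
  rw [hasSum_iff_tendsto_nat_of_nonneg (fun j => sq_nonneg _), funext hpartial]
  exact ((S.flip v).continuous.tendsto v).comp (hframe v)

theorem exists_clm_lp_two_of_hasSum_sq_le {g : ℕ → X →L[ℝ] ℝ} {q : X → ℝ} {C : ℝ} (hC : 0 ≤ C)
    (hg : ∀ v, HasSum (fun j => g j v ^ 2) (q v)) (hq : ∀ v, q v ≤ C ^ 2 * ‖v‖ ^ 2) :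
    ∃ A : X →L[ℝ] lp (fun _ : ℕ => ℝ) 2, (∀ v j, (A v : ℕ → ℝ) j = g j v) ∧ ‖A‖ ≤ C := by
  have hmem : ∀ v, Memℓp (fun j => g j v) 2 := fun v =>
    memℓp_gen (by simpa [Real.rpow_two] using (hg v).summable)
  let L : X →ₗ[ℝ] lp (fun _ : ℕ => ℝ) 2 :=
    { toFun := fun v => ⟨fun j => g j v, hmem v⟩
      map_add' := fun u w => by ext j; simp; rfl
      map_smul' := fun c u => by ext j; simp }
  have hL : ∀ v, ‖L v‖ ≤ C * ‖v‖ := fun v =>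
    lp.norm_le_of_tsum_le (by norm_num) (by positivity) <| by
      change ∑' j, ‖g j v‖ ^ _ ≤ _
      simpa only [ENNReal.toReal_ofNat, Real.rpow_two, Real.norm_eq_abs, sq_abs, (hg v).tsum_eq,
        mul_pow] using hq v
  exact ⟨L.mkContinuous C hL, fun _ _ => rfl, L.mkContinuous_norm_le hC hL⟩

end

theorem hs_analysis_operator_exists_general
    {X : Type*} [NormedAddCommGroup X] [NormedSpace ℝ X]
    (x : ℕ → X) (f : ℕ → X →L[ℝ] ℝ) (hframe : SchauderFrame x f)
    (S : X →L[ℝ] X →L[ℝ] ℝ) (hS : ∀ j, S (x j) = f j) :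
    ∃ A : X →L[ℝ] lp (fun _ : ℕ => ℝ) 2,
      (∀ (v : X) (j : ℕ), (A v : ∀ _ : ℕ, ℝ) j = f j v) ∧ ‖A‖ ≤ Real.sqrt ‖S‖ := by
  refine exists_clm_lp_two_of_hasSum_sq_le (Real.sqrt_nonneg _) (hframe.hasSum_sq hS) fun v => ?_
  calc S v v ≤ ‖S v v‖ := le_abs_self _
    _ ≤ ‖S‖ * ‖v‖ * ‖v‖ := S.le_opNorm₂ v v
    _ = Real.sqrt ‖S‖ ^ 2 * ‖v‖ ^ 2 := by rw [Real.sq_sqrt (norm_nonneg S)]; ring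

/-- The Hilbert-Schauder analysis operator: for a Hilbert-Schauder frame with
HSf-operator `S`, there is a bounded linear operator `A : X → ℓ²` with
`(A x)ⱼ = fⱼ(x)` and `‖A‖ ≤ √‖S‖`. -/
theorem hs_analysis_operator_exists
    {X : Type*} [NormedAddCommGroup X] [NormedSpace ℝ X] [CompleteSpace X]
    (x : ℕ → X) (f : ℕ → X →L[ℝ] ℝ) (hframe : SchauderFrame x f)
    (S : X →L[ℝ] X →L[ℝ] ℝ) (hS : ∀ j, S (x j) = f j) :
    ∃ A : X →L[ℝ] lp (fun _ : ℕ => ℝ) 2,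
      (∀ (v : X) (j : ℕ), (A v : ∀ _ : ℕ, ℝ) j = f j v) ∧ ‖A‖ ≤ Real.sqrt ‖S‖ :=
  hs_analysis_operator_exists_general x f hframe S hS
end

section
/- Let X be a real Banach space and let {(x_j, f_j)}_{j∈ℕ} be a Hilbert-Schauder frame of X with Hilbert-Schauder frame operator S, and let A : X → ℓ²(ℕ, ℝ) be the bounded linear operator with (A x)_j = f_j(x). Then S = A* ∘ A in the sense that for all x, y ∈ X, (S x)(y) = ⟨A x, A y⟩_{ℓ²} = Σ_j f_j(x) f_j(y); in particular the Hilbert-Schauder frame operator S factors through the Hilbert space ℓ²(ℕ, ℝ). -/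
open Filter Topology
open scoped RealInnerProductSpace

theorem SchauderFrame.tendsto_sum_mul_apply {X : Type*} [NormedAddCommGroup X]
    [NormedSpace ℝ X] {x : ℕ → X} {f : ℕ → X →L[ℝ] ℝ} (hframe : SchauderFrame x f)
    (g : X →L[ℝ] ℝ) (v : X) :
    Tendsto (fun N => ∑ j ∈ Finset.range N, f j v * g (x j)) atTop (𝓝 (g v)) := by
  simpa only [Function.comp_def, map_sum, map_smul, smul_eq_mul] using
    (g.continuous.tendsto v).comp (hframe v)

theorem lp.hasSum_mul_of_coe_apply {X : Type*} [NormedAddCommGroup X] [NormedSpace ℝ X]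
    {f : ℕ → X →L[ℝ] ℝ} {A : X →L[ℝ] lp (fun _ : ℕ => ℝ) 2}
    (hA : ∀ (v : X) (j : ℕ), (A v : ∀ _ : ℕ, ℝ) j = f j v) (v w : X) :
    HasSum (fun j => f j v * f j w) ⟪A v, A w⟫ := by
  simpa only [hA, RCLike.inner_apply, Real.ringHom_apply, mul_comm] using
    lp.hasSum_inner (𝕜 := ℝ) (A v) (A w)

theorem hsf_operator_factors_general
    {X : Type*} [NormedAddCommGroup X] [NormedSpace ℝ X]
    (x : ℕ → X) (f : ℕ → X →L[ℝ] ℝ) (hframe : SchauderFrame x f)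
    (S : X →L[ℝ] X →L[ℝ] ℝ) (hS : ∀ j, S (x j) = f j)
    (A : X →L[ℝ] lp (fun _ : ℕ => ℝ) 2)
    (hA : ∀ (v : X) (j : ℕ), (A v : ∀ _ : ℕ, ℝ) j = f j v) :
    ∀ v w : X, S v w = ⟪A v, A w⟫ ∧ HasSum (fun j => f j v * f j w) (S v w) := by
  intro v w
  have hinner := lp.hasSum_mul_of_coe_apply hA v w
  have hframe_sum : Tendsto (fun N => ∑ j ∈ Finset.range N, f j v * f j w) atTop (𝓝 (S v w)) := by
    simpa only [ContinuousLinearMap.apply_apply, ContinuousLinearMap.coe_comp, Function.comp_apply,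
      hS] using hframe.tendsto_sum_mul_apply ((ContinuousLinearMap.apply ℝ ℝ w).comp S) v
  have heq : S v w = ⟪A v, A w⟫ := tendsto_nhds_unique hframe_sum hinner.tendsto_sum_nat
  exact ⟨heq, heq ▸ hinner⟩

/-- The HSf-operator factors through `ℓ²`: `S = A* A`, i.e.
`(S x)(y) = ⟨A x, A y⟩ = ∑ⱼ fⱼ(x) fⱼ(y)`. -/
theorem hsf_operator_factors
    {X : Type*} [NormedAddCommGroup X] [NormedSpace ℝ X] [CompleteSpace X]
    (x : ℕ → X) (f : ℕ → X →L[ℝ] ℝ) (hframe : SchauderFrame x f)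
    (S : X →L[ℝ] X →L[ℝ] ℝ) (hS : ∀ j, S (x j) = f j)
    (A : X →L[ℝ] lp (fun _ : ℕ => ℝ) 2)
    (hA : ∀ (v : X) (j : ℕ), (A v : ∀ _ : ℕ, ℝ) j = f j v) :
    ∀ v w : X, S v w = ⟪A v, A w⟫ ∧ HasSum (fun j => f j v * f j w) (S v w) :=
  hsf_operator_factors_general x f hframe S hS A hA
end

section
/- Let X be a real Banach space. Suppose {(x_{1,j}, f_j)}_{j∈ℕ} and {(x_{2,j}, f_j)}_{j∈ℕ} (with the same second components f_j) are both Hilbert-Schauder frames of X, with Hilbert-Schauder frame operators S₁ and S₂ respectively. Then S₁ = S₂ and x_{1,j} = x_{2,j} for all j ∈ ℕ. -/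
/-!
Applying `S` to the frame expansion `v = ∑ fⱼ(v) xⱼ` gives `S v = ∑ fⱼ(v) fⱼ`, an expression
that no longer mentions the vectors `xⱼ`; hence `S₁ = S₂`, and `S₁` is symmetric since
`S₁ v u = ∑ fⱼ(v) fⱼ(u)`. Then `u = x₁ⱼ - x₂ⱼ` satisfies `S₁ u = 0`, so by symmetry
`fₖ(u) = S₁ (x₁ₖ) u = S₁ u (x₁ₖ) = 0` for every `k`, and the frame expansion of `u` is `0`.
-/

open Filter Topology

open Finset

namespace SchauderFrame

variable {X : Type*} [NormedAddCommGroup X] [NormedSpace ℝ X] {x : ℕ → X} {f : ℕ → X →L[ℝ] ℝ}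

theorem tendsto_sum_smul_map_s7 (h : SchauderFrame x f) {E : Type*} [AddCommGroup E] [Module ℝ E]
    [TopologicalSpace E] (T : X →L[ℝ] E) (v : X) :
    Tendsto (fun N => ∑ j ∈ range N, f j v • T (x j)) atTop (𝓝 (T v)) := by
  simpa only [Function.comp_def, map_sum, map_smul] using (T.continuous.tendsto v).comp (h v)

theorem tendsto_sum_smul_self (h : SchauderFrame x f) {S : X →L[ℝ] X →L[ℝ] ℝ}
    (hS : ∀ j, S (x j) = f j) (v : X) :
    Tendsto (fun N => ∑ j ∈ range N, f j v • f j) atTop (𝓝 (S v)) := by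
  simpa only [hS] using h.tendsto_sum_smul_map_s7 S v

theorem tendsto_sum_mul (h : SchauderFrame x f) {S : X →L[ℝ] X →L[ℝ] ℝ}
    (hS : ∀ j, S (x j) = f j) (v u : X) :
    Tendsto (fun N => ∑ j ∈ range N, f j v * f j u) atTop (𝓝 (S v u)) := by
  simpa only [Function.comp_def, ContinuousLinearMap.apply_apply,
    _root_.sum_apply, smul_apply, smul_eq_mul] using
    ((ContinuousLinearMap.apply ℝ ℝ u).continuous.tendsto (S v)).comp (h.tendsto_sum_smul_self hS v)

theorem apply_comm (h : SchauderFrame x f) {S : X →L[ℝ] X →L[ℝ] ℝ}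
    (hS : ∀ j, S (x j) = f j) (v u : X) : S v u = S u v := by
  refine tendsto_nhds_unique (h.tendsto_sum_mul hS v u) ?_
  simpa only [mul_comm] using h.tendsto_sum_mul hS u v

theorem eq_zero_of_forall_apply_eq_zero (h : SchauderFrame x f) {u : X}
    (hu : ∀ j, f j u = 0) : u = 0 :=
  tendsto_nhds_unique (h u) (by simpa only [hu, zero_smul, sum_const_zero] using tendsto_const_nhds)

theorem operator_unique {x₁ x₂ : ℕ → X} (h₁ : SchauderFrame x₁ f) (h₂ : SchauderFrame x₂ f)
    {S₁ S₂ : X →L[ℝ] X →L[ℝ] ℝ} (hS₁ : ∀ j, S₁ (x₁ j) = f j) (hS₂ : ∀ j, S₂ (x₂ j) = f j) :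
    S₁ = S₂ :=
  ContinuousLinearMap.ext fun v =>
    tendsto_nhds_unique (h₁.tendsto_sum_smul_self hS₁ v) (h₂.tendsto_sum_smul_self hS₂ v)

end SchauderFrame

theorem hsf_frame_unique_vectors_general
    {X : Type*} [NormedAddCommGroup X] [NormedSpace ℝ X]
    (x₁ x₂ : ℕ → X) (f : ℕ → X →L[ℝ] ℝ)
    (hframe₁ : SchauderFrame x₁ f) (hframe₂ : SchauderFrame x₂ f)
    (S₁ S₂ : X →L[ℝ] X →L[ℝ] ℝ)
    (hS₁ : ∀ j, S₁ (x₁ j) = f j) (hS₂ : ∀ j, S₂ (x₂ j) = f j) :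
    S₁ = S₂ ∧ ∀ j, x₁ j = x₂ j := by
  have hS : S₁ = S₂ := hframe₁.operator_unique hframe₂ hS₁ hS₂
  refine ⟨hS, fun j => sub_eq_zero.mp (hframe₁.eq_zero_of_forall_apply_eq_zero fun k => ?_)⟩
  calc f k (x₁ j - x₂ j) = S₁ (x₁ k) (x₁ j - x₂ j) := by rw [hS₁]
    _ = S₁ (x₁ j - x₂ j) (x₁ k) := hframe₁.apply_comm hS₁ _ _
    _ = 0 := by rw [map_sub, hS₁, hS, hS₂, sub_self, zero_apply]

/-- If two Hilbert-Schauder frames share the same functionals `fⱼ`, then their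
HSf-operators coincide and the vectors coincide. -/
theorem hsf_frame_unique_vectors
    {X : Type*} [NormedAddCommGroup X] [NormedSpace ℝ X] [CompleteSpace X]
    (x₁ x₂ : ℕ → X) (f : ℕ → X →L[ℝ] ℝ)
    (hframe₁ : SchauderFrame x₁ f) (hframe₂ : SchauderFrame x₂ f)
    (S₁ S₂ : X →L[ℝ] X →L[ℝ] ℝ)
    (hS₁ : ∀ j, S₁ (x₁ j) = f j) (hS₂ : ∀ j, S₂ (x₂ j) = f j) :
    S₁ = S₂ ∧ ∀ j, x₁ j = x₂ j :=
  hsf_frame_unique_vectors_general x₁ x₂ f hframe₁ hframe₂ S₁ S₂ hS₁ hS₂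
end

section
/- Let X be a real Banach space admitting a Hilbert-Schauder frame {(x_n, f_n)}_{n∈ℕ} with Hilbert-Schauder frame operator S such that, with Y the norm-closed linear span of {S x_n : n ∈ ℕ} in X*, there is a bounded linear operator T : Y → Y* for which {(S x_n, T(S x_n))}_{n∈ℕ} is a Schauder frame of Y (i.e., for every f ∈ Y the partial sums Σ_{n≤N} (T(S x_n))(f) · S x_n converge to f in norm). Then X is isomorphic to a Hilbert space; more precisely, the Hilbert-Schauder analysis operator A : X → ℓ²(ℕ, ℝ), A x = (f_n(x))_n, is a bounded linear operator that is bounded below (there is c > 0 with ‖A x‖ ≥ c ‖x‖ for all x), so X is linearly homeomorphic to a closed subspace of ℓ²(ℕ, ℝ). -/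
open Filter Topology

/-- The norm-closed linear span in `X*` of the range of a sequence of functionals. -/
noncomputable def closedSpan {X : Type*} [NormedAddCommGroup X] [NormedSpace ℝ X]
    (F : ℕ → X →L[ℝ] ℝ) : Submodule ℝ (X →L[ℝ] ℝ) :=
  (Submodule.span ℝ (Set.range F)).topologicalClosure

/-- Port helper: instance synthesis no longer finds Mathlib's own topology of bounded
convergence on `Y →L[ℝ] ℝ` for a submodule `Y` of `X →L[ℝ] ℝ`; this is that same instance. -/
noncomputable instance closedSpanDualTopologicalSpace {X : Type*} [NormedAddCommGroup X]
    [NormedSpace ℝ X] (Y : Submodule ℝ (X →L[ℝ] ℝ)) : TopologicalSpace (Y →L[ℝ] ℝ) :=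
  ContinuousLinearMap.topologicalSpace (E := Y)

/-!
For an HS-frame with operator `S` one has `∑ₙ fₙ(v)² = S v v`, so the analysis operator `A`
maps `X` boundedly into `ℓ²`. The same applies to the frame `(S xₙ, T (S xₙ))` of `Y`, giving
`B : Y → ℓ²`, and expanding `h ∈ Y` in that frame shows `h v = ⟪B h, A v⟫`. Every `ψ ∈ X*` is the
pointwise limit of `ψ ∘ P_N ∈ Y`, where the partial-sum operators `P_N` are uniformly bounded by
some `K` (Banach–Steinhaus). Hence `|ψ v| ≤ ‖B‖ K ‖ψ‖ ‖A v‖`, and Hahn–Banach gives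
`‖v‖ ≤ ‖B‖ K ‖A v‖`: `A` is bounded below, so its range is closed and isomorphic to `X`.
-/

lemma lp.norm_sq_eq_tsum_sq {ι : Type*} (a : lp (fun _ : ι => ℝ) 2) :
    ‖a‖ ^ 2 = ∑' i, a i ^ 2 := by
  rw [← real_inner_self_eq_norm_sq, lp.inner_eq_tsum]
  simp only [Real.inner_apply, sq]

lemma ContinuousLinearMap.exists_isClosed_nonempty_equiv_of_bound
    {E F : Type*} [NormedAddCommGroup E] [NormedSpace ℝ E] [CompleteSpace E]
    [NormedAddCommGroup F] [NormedSpace ℝ F] [CompleteSpace F] (A : E →L[ℝ] F) {c : ℝ} (hc : 0 < c)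
    (hA : ∀ v, c * ‖v‖ ≤ ‖A v‖) :
    ∃ Y : Submodule ℝ F, IsClosed (Y : Set F) ∧ Nonempty (E ≃L[ℝ] Y) := by
  have hanti : AntilipschitzWith ⟨c⁻¹, by positivity⟩ A :=
    A.antilipschitz_of_bound fun v => by
      show ‖v‖ ≤ c⁻¹ * ‖A v‖
      rw [← div_eq_inv_mul, le_div_iff₀' hc]
      exact hA v
  have hclosed : IsClosed (Set.range A) := hanti.isClosed_range A.uniformContinuous
  exact ⟨A.range, by rwa [LinearMap.coe_range], ⟨A.equivRange hanti.injective hclosed⟩⟩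

namespace SchauderFrame

variable {E : Type*} [NormedAddCommGroup E] [NormedSpace ℝ E] {x : ℕ → E} {f : ℕ → E →L[ℝ] ℝ}

noncomputable def partialSum (x : ℕ → E) (f : ℕ → E →L[ℝ] ℝ) (N : ℕ) : E →L[ℝ] E :=
  ∑ n ∈ Finset.range N, (f n).smulRight (x n)

lemma partialSum_apply (N : ℕ) (v : E) :
    partialSum x f N v = ∑ n ∈ Finset.range N, f n v • x n := by
  simp [partialSum]

lemma comp_partialSum (ψ : E →L[ℝ] ℝ) (N : ℕ) :
    ψ.comp (partialSum x f N) = ∑ n ∈ Finset.range N, ψ (x n) • f n := by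
  ext v
  simp [partialSum_apply, mul_comm]

lemma tendsto_partialSum (hx : SchauderFrame x f) (v : E) :
    Tendsto (fun N => partialSum x f N v) atTop (𝓝 v) := by
  simpa only [partialSum_apply] using hx v

lemma exists_norm_partialSum_le [CompleteSpace E] (hx : SchauderFrame x f) :
    ∃ K, ∀ N, ‖partialSum x f N‖ ≤ K :=
  banach_steinhaus fun v => by
    obtain ⟨K, hK⟩ := (hx.tendsto_partialSum v).norm.bddAbove_range
    exact ⟨K, fun N => hK (Set.mem_range_self N)⟩

lemma tendsto_sum_smul_map_s18 {F : Type*} [NormedAddCommGroup F] [NormedSpace ℝ F]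
    (hx : SchauderFrame x f) (φ : E →L[ℝ] F) (v : E) :
    Tendsto (fun N => ∑ n ∈ Finset.range N, f n v • φ (x n)) atTop (𝓝 (φ v)) := by
  simpa only [Function.comp_def, map_sum, map_smul] using (φ.continuous.tendsto v).comp (hx v)

variable {S : E →L[ℝ] E →L[ℝ] ℝ}

lemma hasSum_sq_s18 (hx : SchauderFrame x f) (hS : ∀ n, S (x n) = f n) (v : E) :
    HasSum (fun n => f n v ^ 2) (S v v) := by
  rw [hasSum_iff_tendsto_nat_of_nonneg (fun n => sq_nonneg _)]
  simpa only [ContinuousLinearMap.flip_apply, hS, smul_eq_mul, ← sq]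
    using hx.tendsto_sum_smul_map_s18 (S.flip v) v

lemma memℓp_two (hx : SchauderFrame x f) (hS : ∀ n, S (x n) = f n) (v : E) :
    Memℓp (fun n => f n v) 2 :=
  memℓp_gen (by simpa using (hx.hasSum_sq_s18 hS v).summable)

lemma norm_sq_mk (hx : SchauderFrame x f) (hS : ∀ n, S (x n) = f n) (v : E) :
    ‖(⟨fun n => f n v, hx.memℓp_two hS v⟩ : lp (fun _ : ℕ => ℝ) 2)‖ ^ 2 = S v v := by
  rw [lp.norm_sq_eq_tsum_sq]
  exact (hx.hasSum_sq_s18 hS v).tsum_eq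

noncomputable def analysis (hx : SchauderFrame x f) (hS : ∀ n, S (x n) = f n) :
    E →L[ℝ] lp (fun _ : ℕ => ℝ) 2 :=
  LinearMap.mkContinuous
    { toFun := fun v => ⟨fun n => f n v, hx.memℓp_two hS v⟩
      map_add' := fun u v => lp.ext <| funext fun n => map_add (f n) u v
      map_smul' := fun c v => lp.ext <| funext fun n => map_smul (f n) c v }
    √‖S‖ fun v => by
      rw [← pow_le_pow_iff_left₀ (norm_nonneg _) (by positivity) two_ne_zero, mul_pow,
        Real.sq_sqrt (norm_nonneg S), LinearMap.coe_mk, AddHom.coe_mk, hx.norm_sq_mk hS, sq]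
      exact (Real.le_norm_self _).trans ((S.le_opNorm₂ v v).trans_eq (mul_assoc _ _ _))

@[simp]
lemma analysis_apply (hx : SchauderFrame x f) (hS : ∀ n, S (x n) = f n) (v : E) (n : ℕ) :
    (hx.analysis hS v : ℕ → ℝ) n = f n v :=
  rfl

lemma tendsto_sum_mul_analysis (hx : SchauderFrame x f) (hS : ∀ n, S (x n) = f n)
    (a : lp (fun _ : ℕ => ℝ) 2) (v : E) :
    Tendsto (fun N => ∑ n ∈ Finset.range N, a n * f n v) atTop
      (𝓝 (inner ℝ a (hx.analysis hS v))) := by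
  simpa only [Real.inner_apply, analysis_apply]
    using (lp.hasSum_inner (𝕜 := ℝ) a (hx.analysis hS v)).tendsto_sum_nat

lemma coe_apply_eq_inner_analysis (hx : SchauderFrame x f) (hS : ∀ n, S (x n) = f n)
    {Y : Submodule ℝ (E →L[ℝ] ℝ)} {g : ℕ → Y} {φ : ℕ → Y →L[ℝ] ℝ} {T : Y →L[ℝ] Y →L[ℝ] ℝ}
    (hg : ∀ n, (g n : E →L[ℝ] ℝ) = f n) (hy : SchauderFrame g φ) (hT : ∀ n, T (g n) = φ n)
    (h : Y) (v : E) :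
    (h : E →L[ℝ] ℝ) v = inner ℝ (hy.analysis hT h) (hx.analysis hS v) := by
  have hev := hy.tendsto_sum_smul_map_s18 ((ContinuousLinearMap.apply ℝ ℝ v).comp Y.subtypeL) h
  simp only [ContinuousLinearMap.comp_apply, ContinuousLinearMap.apply_apply,
    Submodule.subtypeL_apply, hg, smul_eq_mul] at hev
  refine tendsto_nhds_unique hev ?_
  simpa only [analysis_apply] using hx.tendsto_sum_mul_analysis hS (hy.analysis hT h) v

lemma exists_pos_mul_norm_le_norm_analysis [CompleteSpace E] (hx : SchauderFrame x f)
    (hS : ∀ n, S (x n) = f n) {Y : Submodule ℝ (E →L[ℝ] ℝ)} {g : ℕ → Y} {φ : ℕ → Y →L[ℝ] ℝ}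
    {T : Y →L[ℝ] Y →L[ℝ] ℝ} (hg : ∀ n, (g n : E →L[ℝ] ℝ) = f n) (hy : SchauderFrame g φ)
    (hT : ∀ n, T (g n) = φ n) :
    ∃ c > 0, ∀ v, c * ‖v‖ ≤ ‖hx.analysis hS v‖ := by
  obtain ⟨K, hK⟩ := hx.exists_norm_partialSum_le
  have hK0 : 0 ≤ K := (norm_nonneg _).trans (hK 0)
  set A := hx.analysis hS
  set B := hy.analysis hT
  have hmem (ψ : E →L[ℝ] ℝ) (N : ℕ) : ψ.comp (partialSum x f N) ∈ Y := by
    rw [comp_partialSum]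
    exact Y.sum_mem fun n _ => Y.smul_mem _ (hg n ▸ (g n).2)
  have hdual (v : E) (ψ : E →L[ℝ] ℝ) : ‖ψ v‖ ≤ ‖B‖ * K * ‖A v‖ * ‖ψ‖ := by
    refine le_of_tendsto ((ψ.continuous.tendsto v).comp (hx.tendsto_partialSum v)).norm
      (Eventually.of_forall fun N => ?_)
    calc ‖ψ (partialSum x f N v)‖ = ‖inner ℝ (B ⟨_, hmem ψ N⟩) (A v)‖ := by
          rw [← hx.coe_apply_eq_inner_analysis hS hg hy hT]; rfl
      _ ≤ ‖B‖ * ‖ψ.comp (partialSum x f N)‖ * ‖A v‖ := by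
          grw [norm_inner_le_norm]
          exact mul_le_mul_of_nonneg_right (B.le_opNorm _) (norm_nonneg _)
      _ ≤ ‖B‖ * (‖ψ‖ * K) * ‖A v‖ := by
          grw [ψ.opNorm_comp_le, hK N]
      _ = ‖B‖ * K * ‖A v‖ * ‖ψ‖ := by ring
  refine ⟨(‖B‖ * K + 1)⁻¹, by positivity, fun v => ?_⟩
  rw [← div_eq_inv_mul, div_le_iff₀' (by positivity)]
  calc ‖v‖ ≤ ‖B‖ * K * ‖A v‖ := NormedSpace.norm_le_dual_bound ℝ v (by positivity) (hdual v)
    _ ≤ (‖B‖ * K + 1) * ‖A v‖ := by gcongr; linarith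

end SchauderFrame

/-- Suppose `X` has a Hilbert-Schauder frame `{(xₙ, fₙ)}` with HSf-operator `S` such
that, with `Y` the norm-closed linear span of `{S xₙ}` in `X*`, some bounded
`T : Y → Y*` makes `{(S xₙ, T(S xₙ))}` a Schauder frame of `Y`.  Then the analysis
operator `A : X → ℓ²`, `(A v)ⱼ = fⱼ(v)`, is bounded below, so `X` is linearly
homeomorphic to a closed subspace of `ℓ²`; in particular `X` is isomorphic to a
Hilbert space. -/
theorem hsf_with_dual_frame_isomorphic_hilbert
    {X : Type*} [NormedAddCommGroup X] [NormedSpace ℝ X] [CompleteSpace X]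
    (x : ℕ → X) (f : ℕ → X →L[ℝ] ℝ) (hframe : SchauderFrame x f)
    (S : X →L[ℝ] X →L[ℝ] ℝ) (hS : ∀ n, S (x n) = f n)
    (T : (closedSpan fun n => S (x n)) →L[ℝ] ((closedSpan fun n => S (x n)) →L[ℝ] ℝ))
    (g : ℕ → (closedSpan fun n => S (x n)))
    (hg : ∀ n, (g n : X →L[ℝ] ℝ) = S (x n))
    (hT : ∀ h : (closedSpan fun n => S (x n)),
      Tendsto (fun N => ∑ n ∈ Finset.range N, T (g n) h • g n) atTop (𝓝 h)) :
    ∃ A : X →L[ℝ] lp (fun _ : ℕ => ℝ) 2,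
      (∀ (v : X) (j : ℕ), (A v : ∀ _ : ℕ, ℝ) j = f j v) ∧
      (∃ c : ℝ, 0 < c ∧ ∀ v : X, c * ‖v‖ ≤ ‖A v‖) ∧
      ∃ Y : Submodule ℝ (lp (fun _ : ℕ => ℝ) 2),
        IsClosed (Y : Set (lp (fun _ : ℕ => ℝ) 2)) ∧ Nonempty (X ≃L[ℝ] Y) := by
  obtain ⟨c, hc, hA⟩ := hframe.exists_pos_mul_norm_le_norm_analysis hS
    (fun n => (hg n).trans (hS n)) (φ := fun n => T (g n)) hT (fun _ => rfl)
  exact ⟨hframe.analysis hS, hframe.analysis_apply hS, ⟨c, hc, hA⟩,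
    (hframe.analysis hS).exists_isClosed_nonempty_equiv_of_bound hc hA⟩
end
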